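/- arXiv:0901.4493 — 5 statements merged into one kernel-verified Lean document; each statement's English description precedes it below -/
import Mathlib

section
/- The clique polynomial of a free partially commutative monoid M is a two-sided inverse of the constant power series χ_M (the formal power series assigning 1 to every element of M) in the ring of formal power series on M with integer coefficients. -/
open scoped Classical

/-- The relation generating a free partially commutative (trace) monoid:
`x_a x_b = x_b x_a` for `(a,b)` in the commutation set `I`. -/
def traceRel (n : ℕ) (I : Set (Fin n × Fin n)) :
    FreeMonoid (Fin n) → FreeMonoid (Fin n) → Prop := fun u v =>
  ∃ a b, (a, b) ∈ I ∧ u = FreeMonoid.of a * FreeMonoid.of b ∧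
    v = FreeMonoid.of b * FreeMonoid.of a

/-- The congruence generated by the commutation relations. -/
abbrev traceCon (n : ℕ) (I : Set (Fin n × Fin n)) : Con (FreeMonoid (Fin n)) :=
  conGen (traceRel n I)

/-- The free partially commutative monoid `⟨x_1,…,x_n⟩/≃_I`. -/
abbrev TraceMonoid (n : ℕ) (I : Set (Fin n × Fin n)) := (traceCon n I).Quotient

/-- The generator `x_i` as an element of the trace monoid. -/
def gen {n : ℕ} {I : Set (Fin n × Fin n)} (i : Fin n) : TraceMonoid n I :=
  (traceCon n I).mk' (FreeMonoid.of i)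

/-- A clique of the trace monoid: a set of generators which pairwise commute. -/
def IsMClique {n : ℕ} (I : Set (Fin n × Fin n)) (Q : Finset (Fin n)) : Prop :=
  ∀ a ∈ Q, ∀ b ∈ Q, a ≠ b → Commute (gen (I := I) a) (gen (I := I) b)

/-- The canonical word `w_Q` in the trace monoid associated to a finite set of
generators (taking the product in increasing order). -/
def wordOf {n : ℕ} (I : Set (Fin n × Fin n)) (Q : Finset (Fin n)) : TraceMonoid n I :=
  (traceCon n I).mk' (FreeMonoid.ofList (Q.sort (· ≤ ·)))

/-- The Cauchy product of two formal power series on a monoid. -/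
noncomputable def cauchy {M : Type*} [Monoid M] (f g : M → ℤ) : M → ℤ := fun w =>
  ∑ᶠ p : M × M, if p.1 * p.2 = w then f p.1 * g p.2 else 0

/-- The unit of the ring of formal power series: the characteristic function
of the identity. -/
noncomputable def deltaOne {M : Type*} [Monoid M] : M → ℤ := fun w => if w = 1 then 1 else 0

/-- The clique polynomial `μ_M = Σ_Q (−1)^{|Q|} [Q]` of a trace monoid. -/
noncomputable def cliqueSeries (n : ℕ) (I : Set (Fin n × Fin n)) : TraceMonoid n I → ℤ :=
  fun w => ∑ Q ∈ (Finset.univ : Finset (Fin n)).powerset.filter (IsMClique I),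
    if wordOf I Q = w then (-1 : ℤ) ^ Q.card else 0

/-! The coefficient of `w` in `μ_M · χ_M` is the signed count of the cliques `Q` with `w_Q` a
left factor of `w`. Scanning a word for a letter shows that two distinct letters which can both
stand first in `w` commute, and that the letter left over after cancelling one of them can still
be moved to the front. Hence the letters that can stand first in `w` form a clique `A`, and `w_Q`
is a left factor of `w` exactly when `Q ⊆ A`; the coefficient is `∑_{Q ⊆ A} (-1)^|Q|`, which
vanishes unless `A = ∅`, i.e. `w = 1`. The product `χ_M · μ_M` is the mirror image of
`μ_M · χ_M` under the anti-automorphism reversing words, which fixes both factors. -/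
section Cauchy

variable {M : Type*} [Monoid M]

theorem cauchy_comp_of_antiInvolutive {φ : M → M} (hφ : Function.Involutive φ)
    (hφmul : ∀ u v, φ (u * v) = φ v * φ u) (f g : M → ℤ) (w : M) :
    cauchy (g ∘ φ) (f ∘ φ) w = cauchy f g (φ w) := by
  refine finsum_eq_of_bijective (fun p => (φ p.2, φ p.1))
    (Function.Involutive.bijective fun p => by simp [hφ _]) fun p => ?_
  have hiff : p.1 * p.2 = w ↔ φ p.2 * φ p.1 = φ w := by
    rw [← hφmul, hφ.injective.eq_iff]
  simp only [Function.comp_apply, hiff, mul_comm (g _)]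

theorem finsum_ite_eq_fst_and_mul_eq [IsLeftCancelMul M] [DecidableEq M] (u w : M) (c : ℤ) :
    (∑ᶠ p : M × M, if u = p.1 ∧ p.1 * p.2 = w then c else 0) = if u ∣ w then c else 0 := by
  by_cases hdvd : u ∣ w
  · obtain ⟨v, rfl⟩ := hdvd
    rw [if_pos (dvd_mul_right u v), finsum_eq_single _ (u, v), if_pos ⟨rfl, rfl⟩]
    rintro ⟨u', v'⟩ hne
    refine if_neg fun ⟨hu, huv⟩ => hne ?_
    subst hu
    exact Prod.ext rfl (mul_left_cancel huv)
  · rw [if_neg hdvd]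
    exact finsum_eq_zero_of_forall_eq_zero fun p =>
      if_neg fun ⟨hu, huv⟩ => hdvd ⟨p.2, hu ▸ huv.symm⟩

theorem cauchy_sum_ite_const_one [IsLeftCancelMul M] [DecidableEq M] {ι : Type*} (s : Finset ι)
    (x : ι → M) (c : ι → ℤ) (w : M) :
    cauchy (fun u => ∑ i ∈ s, if x i = u then c i else 0) (fun _ => 1) w =
      ∑ i ∈ s with x i ∣ w, c i := by
  have hterm : ∀ p : M × M, (if p.1 * p.2 = w then
      (∑ i ∈ s, if x i = p.1 then c i else 0) * 1 else 0) =
      ∑ i ∈ s, if x i = p.1 ∧ p.1 * p.2 = w then c i else 0 := by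
    intro p
    split_ifs with h <;> simp [h]
  unfold cauchy
  simp_rw [hterm]
  rw [finsum_sum_comm]
  · simp_rw [finsum_ite_eq_fst_and_mul_eq, Finset.sum_filter]
  · intro i _
    refine Set.Subsingleton.finite ?_
    rintro ⟨u, v⟩ huv ⟨u', v'⟩ huv'
    simp only [Function.mem_support, ne_eq, ite_eq_right_iff, not_forall] at huv huv'
    obtain ⟨⟨rfl, h⟩, -⟩ := huv
    obtain ⟨⟨rfl, h'⟩, -⟩ := huv'
    exact Prod.ext rfl (mul_left_cancel (h.trans h'.symm))

end Cauchy

namespace TraceMonoid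

variable {n : ℕ} {I : Set (Fin n × Fin n)}

theorem gen_mul_gen_comm {a b : Fin n} (hab : (a, b) ∈ I) :
    gen (I := I) a * gen b = gen b * gen a :=
  (Con.eq _).2 (ConGen.Rel.of _ _ ⟨a, b, hab, rfl, rfl⟩)

@[elab_as_elim]
theorem gen_mul_induction {motive : TraceMonoid n I → Prop} (w : TraceMonoid n I)
    (one : motive 1) (gen_mul : ∀ a w, motive w → motive (gen a * w)) : motive w :=
  Con.induction_on w fun u =>
    FreeMonoid.inductionOn' u one fun a _ hu => gen_mul a _ hu

def lift {N : Type*} [Monoid N] (f : Fin n → N)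
    (hf : ∀ a b, (a, b) ∈ I → f a * f b = f b * f a) : TraceMonoid n I →* N :=
  Con.lift _ (FreeMonoid.lift f) <| Con.conGen_le.2 fun _ _ ⟨a, b, hab, hu, hv⟩ => by
    simp only [hu, hv, Con.ker_rel, map_mul, FreeMonoid.lift_eval_of, hf a b hab]

@[simp]
theorem lift_gen {N : Type*} [Monoid N] (f : Fin n → N)
    (hf : ∀ a b, (a, b) ∈ I → f a * f b = f b * f a) (a : Fin n) :
    lift f hf (gen a) = f a := by
  simp [lift, gen]

/- Scanning a word from the left for a letter `a`: `clear p` means that `a` has not occurred yet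
and the prefix `p` read so far commutes with it; `found r` means that `a` could be moved to the
front, leaving `r`; `blocked` means that a letter not commuting with `a` came first. -/
inductive LeftScan (M : Type*)
  | clear (p : M)
  | found (r : M)
  | blocked

noncomputable def scanStep (a c : Fin n) : Function.End (LeftScan (TraceMonoid n I))
  | .clear p =>
    if c = a then .found p
    else if Commute (gen (I := I) a) (gen c) then .clear (p * gen c) else .blocked
  | .found r => .found (r * gen c)
  | .blocked => .blocked

theorem scanStep_comm (a : Fin n) {x y : Fin n} (hxy : (x, y) ∈ I)
    (s : LeftScan (TraceMonoid n I)) :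
    scanStep a y (scanStep a x s) = scanStep a x (scanStep a y s) := by
  have hcomm : Commute (gen (I := I) x) (gen y) := gen_mul_gen_comm hxy
  rcases s with p | r | _
  · by_cases hx : x = a <;> by_cases hy : y = a
    · subst hx hy; rfl
    · subst hx; simp [scanStep, hy, hcomm]
    · subst hy; simp [scanStep, hx, hcomm.symm]
    · by_cases hax : Commute (gen (I := I) a) (gen x) <;>
        by_cases hay : Commute (gen (I := I) a) (gen y) <;>
        simp [scanStep, hx, hy, hax, hay, mul_assoc, hcomm.eq]
  · simp [scanStep, mul_assoc, hcomm.eq]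
  · rfl

noncomputable def scan (a : Fin n) :
    TraceMonoid n I →* (Function.End (LeftScan (TraceMonoid n I)))ᵐᵒᵖ :=
  lift (fun c => .op (scanStep a c)) fun _ _ hxy => by
    rw [← MulOpposite.op_mul, ← MulOpposite.op_mul]
    exact congrArg _ (funext (scanStep_comm a hxy))

theorem scan_mul_apply (a : Fin n) (u v : TraceMonoid n I) (s : LeftScan (TraceMonoid n I)) :
    (scan a (u * v)).unop s = (scan a v).unop ((scan a u).unop s) := by
  rw [map_mul]
  rfl

theorem scan_one_apply (a : Fin n) (s : LeftScan (TraceMonoid n I)) :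
    (scan a 1).unop s = s := by
  rw [map_one]
  rfl

theorem scan_gen_mul_apply (a c : Fin n) (w : TraceMonoid n I) (s : LeftScan (TraceMonoid n I)) :
    (scan a (gen c * w)).unop s = (scan a w).unop (scanStep a c s) := by
  rw [scan_mul_apply, scan, lift_gen, MulOpposite.unop_op]

theorem scan_found (a : Fin n) (w r : TraceMonoid n I) :
    (scan a w).unop (.found r) = .found (r * w) := by
  induction w using gen_mul_induction generalizing r with
  | one => rw [scan_one_apply, mul_one]
  | gen_mul c w ih => rw [scan_gen_mul_apply, scanStep, ih, mul_assoc]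

theorem scan_blocked (a : Fin n) (w : TraceMonoid n I) :
    (scan a w).unop .blocked = .blocked := by
  induction w using gen_mul_induction with
  | one => rw [scan_one_apply]
  | gen_mul c w ih => rw [scan_gen_mul_apply, scanStep, ih]

theorem scan_gen_mul_self (a : Fin n) (w : TraceMonoid n I) :
    (scan a (gen a * w)).unop (.clear 1) = .found w := by
  rw [scan_gen_mul_apply, scanStep, if_pos rfl, scan_found, one_mul]

theorem gen_dvd_of_scan_clear_eq_found {a : Fin n} {w p r : TraceMonoid n I}
    (h : (scan a w).unop (.clear p) = .found r) : gen a ∣ w := by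
  induction w using gen_mul_induction generalizing p with
  | one =>
    rw [scan_one_apply] at h
    cases h
  | gen_mul c w ih =>
    rw [scan_gen_mul_apply, scanStep] at h
    split_ifs at h with hca hac
    · exact hca ▸ dvd_mul_right _ _
    · obtain ⟨t, rfl⟩ := ih h
      exact ⟨gen c * t, by rw [← mul_assoc, ← mul_assoc, hac.eq]⟩
    · simp [scan_blocked] at h

theorem gen_mul_left_cancel {a : Fin n} {u v : TraceMonoid n I} (h : gen a * u = gen a * v) :
    u = v := by
  have hscan := scan_gen_mul_self (I := I) a u
  rw [h, scan_gen_mul_self] at hscan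
  exact (LeftScan.found.inj hscan).symm

theorem commute_and_gen_dvd_of_gen_mul_eq {a b : Fin n} (hab : a ≠ b) {u v : TraceMonoid n I}
    (h : gen a * u = gen b * v) : Commute (gen (I := I) a) (gen b) ∧ gen b ∣ u := by
  have hscan := scan_gen_mul_self (I := I) b v
  rw [← h, scan_gen_mul_apply, scanStep, if_neg hab] at hscan
  split_ifs at hscan with hba
  · exact ⟨hba.symm, gen_dvd_of_scan_clear_eq_found hscan⟩
  · simp [scan_blocked] at hscan

theorem not_gen_dvd_one (a : Fin n) : ¬ gen (I := I) a ∣ 1 := by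
  rintro ⟨w, hw⟩
  have hscan := scan_gen_mul_self (I := I) a w
  rw [← hw, scan_one_apply] at hscan
  cases hscan

instance : IsLeftCancelMul (TraceMonoid n I) where
  mul_left_cancel u := by
    induction u using gen_mul_induction with
    | one => exact fun v w h => by simpa using h
    | gen_mul a u ih => exact fun v w h => ih (gen_mul_left_cancel (by simpa [mul_assoc] using h))

end TraceMonoid

theorem IsMClique.mono {n : ℕ} {I : Set (Fin n × Fin n)} {Q P : Finset (Fin n)}
    (hQ : IsMClique I Q) (hPQ : P ⊆ Q) : IsMClique I P :=
  fun a ha b hb hab => hQ a (hPQ ha) b (hPQ hb) hab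

theorem IsMClique.pairwise_commute {n : ℕ} {I : Set (Fin n × Fin n)} {Q : Finset (Fin n)}
    (hQ : IsMClique I Q) : (Q : Set (Fin n)).Pairwise (Function.onFun Commute (gen (I := I))) :=
  fun a ha b hb hab => hQ a ha b hb hab

namespace TraceMonoid

variable {n : ℕ} {I : Set (Fin n × Fin n)}

theorem mk'_ofList (l : List (Fin n)) :
    (traceCon n I).mk' (FreeMonoid.ofList l) = (l.map gen).prod := by
  induction l with
  | nil => rfl
  | cons a l ih => rw [FreeMonoid.ofList_cons, map_mul, ih]; rfl

theorem wordOf_eq_noncommProd {Q : Finset (Fin n)} (hQ : IsMClique I Q) :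
    wordOf I Q = Q.noncommProd gen hQ.pairwise_commute := by
  rw [wordOf, mk'_ofList, ← Finset.noncommProd_toFinset _ _ _ (Finset.sort_nodup _ _)]
  · congr 1
    exact Finset.sort_toFinset _ _
  · rw [Finset.sort_toFinset]
    exact hQ.pairwise_commute

theorem wordOf_insert {a : Fin n} {Q : Finset (Fin n)} (ha : a ∉ Q)
    (hQ : IsMClique I (insert a Q)) : wordOf I (insert a Q) = gen a * wordOf I Q := by
  rw [wordOf_eq_noncommProd hQ, wordOf_eq_noncommProd (hQ.mono (Finset.subset_insert a Q)),
    Finset.noncommProd_insert_of_notMem _ _ _ _ ha]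

theorem wordOf_insert' {a : Fin n} {Q : Finset (Fin n)} (ha : a ∉ Q)
    (hQ : IsMClique I (insert a Q)) : wordOf I (insert a Q) = wordOf I Q * gen a := by
  rw [wordOf_eq_noncommProd hQ, wordOf_eq_noncommProd (hQ.mono (Finset.subset_insert a Q)),
    Finset.noncommProd_insert_of_notMem' _ _ _ _ ha]

theorem wordOf_empty : wordOf I ∅ = 1 := by
  simp [wordOf]

noncomputable def initials (w : TraceMonoid n I) : Finset (Fin n) :=
  Finset.univ.filter fun a => gen a ∣ w

theorem mem_initials {w : TraceMonoid n I} {a : Fin n} : a ∈ initials w ↔ gen a ∣ w := by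
  simp [initials]

theorem isMClique_initials (w : TraceMonoid n I) : IsMClique I (initials w) := by
  intro a ha b hb hab
  obtain ⟨u, hu⟩ := mem_initials.1 ha
  obtain ⟨v, hv⟩ := mem_initials.1 hb
  exact (commute_and_gen_dvd_of_gen_mul_eq hab (hu.symm.trans hv)).1

theorem initials_eq_empty_iff {w : TraceMonoid n I} : initials w = ∅ ↔ w = 1 := by
  constructor
  · induction w using gen_mul_induction with
    | one => exact fun _ => rfl
    | gen_mul a w _ =>
      intro h
      exact absurd (mem_initials.2 (dvd_mul_right _ _)) (h ▸ Finset.notMem_empty a)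
  · rintro rfl
    ext a
    simp [mem_initials, not_gen_dvd_one]

theorem wordOf_dvd_of_subset_initials {Q : Finset (Fin n)} {w : TraceMonoid n I}
    (hQ : Q ⊆ initials w) : wordOf I Q ∣ w := by
  induction Q using Finset.induction_on generalizing w with
  | empty => simp [wordOf_empty]
  | insert a Q ha ih =>
    obtain ⟨u, rfl⟩ := mem_initials.1 (hQ (Finset.mem_insert_self a Q))
    have hQu : Q ⊆ initials u := fun b hb => by
      obtain ⟨v, hv⟩ := mem_initials.1 (hQ (Finset.mem_insert_of_mem hb))
      exact mem_initials.2
        (commute_and_gen_dvd_of_gen_mul_eq (ne_of_mem_of_not_mem hb ha).symm hv).2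
    rw [wordOf_insert ha ((isMClique_initials _).mono hQ)]
    exact mul_dvd_mul_left _ (ih hQu)

theorem subset_initials_of_wordOf_dvd {Q : Finset (Fin n)} {w : TraceMonoid n I}
    (hQ : IsMClique I Q) (hw : wordOf I Q ∣ w) : Q ⊆ initials w := by
  intro a ha
  refine mem_initials.2 (dvd_trans ⟨wordOf I (Q.erase a), ?_⟩ hw)
  rw [← wordOf_insert (Finset.notMem_erase a Q) (by rwa [Finset.insert_erase ha]),
    Finset.insert_erase ha]

theorem isMClique_and_wordOf_dvd_iff {Q : Finset (Fin n)} {w : TraceMonoid n I} :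
    IsMClique I Q ∧ wordOf I Q ∣ w ↔ Q ⊆ initials w :=
  ⟨fun ⟨hQ, hw⟩ => subset_initials_of_wordOf_dvd hQ hw,
    fun hQ => ⟨(isMClique_initials w).mono hQ, wordOf_dvd_of_subset_initials hQ⟩⟩

noncomputable def reverse (w : TraceMonoid n I) : TraceMonoid n I :=
  (lift (fun a => MulOpposite.op (gen (I := I) a)) (fun _ _ hab => by
    rw [← MulOpposite.op_mul, ← MulOpposite.op_mul, gen_mul_gen_comm hab]) w).unop

theorem reverse_mul (u v : TraceMonoid n I) : reverse (u * v) = reverse v * reverse u := by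
  simp [reverse]

theorem reverse_one : reverse (1 : TraceMonoid n I) = 1 := by
  simp [reverse]

theorem reverse_gen (a : Fin n) : reverse (gen (I := I) a) = gen a := by
  simp [reverse]

theorem reverse_involutive : Function.Involutive (reverse (n := n) (I := I)) := by
  intro w
  induction w using gen_mul_induction with
  | one => rw [reverse_one, reverse_one]
  | gen_mul a w ih => rw [reverse_mul, reverse_mul, reverse_gen, reverse_gen, ih]

theorem reverse_eq_one_iff {w : TraceMonoid n I} : reverse w = 1 ↔ w = 1 :=
  reverse_involutive.injective.eq_iff' reverse_one

theorem reverse_wordOf {Q : Finset (Fin n)} (hQ : IsMClique I Q) :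
    reverse (wordOf I Q) = wordOf I Q := by
  induction Q using Finset.induction_on with
  | empty => rw [wordOf_empty, reverse_one]
  | insert a Q ha ih =>
    rw [wordOf_insert ha hQ, reverse_mul, reverse_gen,
      ih (hQ.mono (Finset.subset_insert a Q)), ← wordOf_insert' ha hQ, wordOf_insert ha hQ]

end TraceMonoid

open TraceMonoid

theorem cliqueSeries_comp_reverse (n : ℕ) (I : Set (Fin n × Fin n)) :
    cliqueSeries n I ∘ reverse = cliqueSeries n I := by
  funext w
  simp only [Function.comp_apply, cliqueSeries]
  refine Finset.sum_congr rfl fun Q hQ => ?_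
  have hiff : wordOf I Q = reverse w ↔ wordOf I Q = w := by
    conv_lhs => rw [← reverse_wordOf (Finset.mem_filter.1 hQ).2]
    exact reverse_involutive.injective.eq_iff
  exact if_congr hiff rfl rfl

theorem cauchy_cliqueSeries_const_one {n : ℕ} {I : Set (Fin n × Fin n)} (w : TraceMonoid n I) :
    cauchy (cliqueSeries n I) (fun _ => 1) w = deltaOne w := by
  have hsupport : (((Finset.univ : Finset (Fin n)).powerset.filter (IsMClique I)).filter
      fun (Q : Finset (Fin n)) => wordOf I Q ∣ w) = (initials w).powerset := by
    ext Q
    simp [← isMClique_and_wordOf_dvd_iff]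
  unfold cliqueSeries
  rw [cauchy_sum_ite_const_one, hsupport, Finset.sum_powerset_neg_one_pow_card]
  simp only [deltaOne, initials_eq_empty_iff]
  congr

/-- **Cartier–Foata.** The clique polynomial of a free partially commutative
monoid is a two-sided inverse of the constant power series χ_M in the ring of
formal power series on M (functions M → ℤ with the Cauchy product, whose unit
is the characteristic function of the identity). -/
theorem stmt_0 (n : ℕ) (I : Set (Fin n × Fin n)) :
    cauchy (cliqueSeries n I) (fun _ => 1) = deltaOne ∧
    cauchy (fun _ => 1) (cliqueSeries n I) = deltaOne := by
  refine ⟨funext cauchy_cliqueSeries_const_one, funext fun w => ?_⟩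
  calc cauchy (fun _ => 1) (cliqueSeries n I) w
      = cauchy ((fun _ => 1) ∘ reverse) (cliqueSeries n I ∘ reverse) w := by
        rw [cliqueSeries_comp_reverse]; rfl
    _ = deltaOne (reverse w) := by
        rw [cauchy_comp_of_antiInvolutive reverse_involutive reverse_mul,
          cauchy_cliqueSeries_const_one]
    _ = deltaOne w := by
        simp only [deltaOne, reverse_eq_one_iff]
        congr
end

section
/- Let M be a free partially commutative monoid and w ∈ M a nonidentity element. Let S be the set of generators a such that w = a·w' for some w' ∈ M. Then S is a clique, i.e., every two distinct elements of S commute in M. -/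
/-!
If `a ≠ b` and neither `(a, b)` nor `(b, a)` lies in `I`, then erasing every letter other than
`a` and `b` respects the commutation relations, so it descends to a morphism from the trace
monoid to the free monoid. It sends `gen a * u` and `gen b * v` to words starting with `a` and
with `b` respectively, so no element has both `a` and `b` as left divisors.
-/

open scoped Classical

namespace TraceMonoid

variable {n : ℕ} {I : Set (Fin n × Fin n)}

theorem gen_commute_of_mem {a b : Fin n} (h : (a, b) ∈ I) :
    Commute (gen (I := I) a) (gen (I := I) b) := by
  have hrel : traceCon n I (.of a * .of b) (.of b * .of a) := ConGen.Rel.of _ _ ⟨a, b, h, rfl, rfl⟩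
  show (traceCon n I).mk' _ * (traceCon n I).mk' _ = (traceCon n I).mk' _ * (traceCon n I).mk' _
  rw [← map_mul, ← map_mul]
  exact (traceCon n I).eq.mpr hrel

def PairwiseDependent (I : Set (Fin n × Fin n)) (s : Set (Fin n)) : Prop :=
  ∀ c d, (c, d) ∈ I → c ∈ s → d ∈ s → c = d

noncomputable def eraseOutside (s : Set (Fin n)) : FreeMonoid (Fin n) →* FreeMonoid (Fin n) :=
  FreeMonoid.lift fun c => if c ∈ s then .of c else 1

theorem traceCon_le_ker_eraseOutside {s : Set (Fin n)} (hs : PairwiseDependent I s) :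
    traceCon n I ≤ Con.ker (eraseOutside s) := by
  refine Con.conGen_le.2 ?_
  rintro _ _ ⟨c, d, hcd, rfl, rfl⟩
  show eraseOutside s (.of c * .of d) = eraseOutside s (.of d * .of c)
  by_cases hc : c ∈ s
  · by_cases hd : d ∈ s
    · rw [hs c d hcd hc hd]
    · simp [eraseOutside, hd]
  · simp [eraseOutside, hc]

noncomputable def projOnto (s : Set (Fin n)) (hs : PairwiseDependent I s) :
    TraceMonoid n I →* FreeMonoid (Fin n) :=
  (traceCon n I).lift (eraseOutside s) (traceCon_le_ker_eraseOutside hs)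

theorem projOnto_gen {s : Set (Fin n)} (hs : PairwiseDependent I s) {c : Fin n} (hc : c ∈ s) :
    projOnto s hs (gen c) = .of c := by
  simp [projOnto, gen, eraseOutside, hc]

theorem eq_of_gen_mul_eq_gen_mul {a b : Fin n} (hab : (a, b) ∉ I) (hba : (b, a) ∉ I)
    {u v : TraceMonoid n I} (h : gen a * u = gen b * v) : a = b := by
  have hs : PairwiseDependent I {a, b} := by
    rintro c d hcd (rfl | rfl) (rfl | rfl) <;> first | rfl | contradiction
  have hproj := congrArg (FreeMonoid.toList ∘ projOnto {a, b} hs) h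
  simp only [Function.comp_apply, map_mul, projOnto_gen hs (Set.mem_insert a _),
    projOnto_gen hs (Set.mem_insert_of_mem a rfl), FreeMonoid.toList_mul, FreeMonoid.toList_of,
    List.singleton_append, List.cons.injEq] at hproj
  exact hproj.1

end TraceMonoid

theorem stmt_1_general (n : ℕ) (I : Set (Fin n × Fin n)) (w : TraceMonoid n I)
    (a b : Fin n) (ha : ∃ w' : TraceMonoid n I, w = gen a * w')
    (hb : ∃ w' : TraceMonoid n I, w = gen b * w') (hab : a ≠ b) :
    Commute (gen (I := I) a) (gen (I := I) b) := by
  by_cases hI : (a, b) ∈ I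
  · exact TraceMonoid.gen_commute_of_mem hI
  by_cases hI' : (b, a) ∈ I
  · exact (TraceMonoid.gen_commute_of_mem hI').symm
  obtain ⟨u, rfl⟩ := ha
  obtain ⟨v, huv⟩ := hb
  exact absurd (TraceMonoid.eq_of_gen_mul_eq_gen_mul hI hI' huv) hab

/-- Let w be a nonidentity element of a free partially commutative monoid and
let S be the set of generators a such that w = a·w' for some w'.  Then every
two distinct elements of S commute in M, i.e. S is a clique. -/
theorem stmt_1 (n : ℕ) (I : Set (Fin n × Fin n)) (w : TraceMonoid n I) (hw : w ≠ 1)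
    (a b : Fin n) (ha : ∃ w' : TraceMonoid n I, w = gen a * w')
    (hb : ∃ w' : TraceMonoid n I, w = gen b * w') (hab : a ≠ b) :
    Commute (gen (I := I) a) (gen (I := I) b) :=
  stmt_1_general n I w a b ha hb hab
end

section
/- Let Γ be a finite simple graph with positive integer vertex weights p_i and, for each edge j with endpoints a_j, b_j, a weight q_j ∈ ℤ/2. Then the graded algebra A = k⟨x_i : i ∈ V⟩/I(Γ), where I(Γ) is the two-sided ideal generated by the elements x_{a_j} x_{b_j} − (−1)^{q_j} x_{b_j} x_{a_j} for j ∈ E, has Hilbert series H_A(z) = [c_Γ(z)]^{-1}, independent of the choice of edge weights q_j. -/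
open scoped Classical

/-- The degree-`d` component of a quotient of the free algebra by (the
two-sided ideal generated by) a relation `rel`, with respect to the grading in
which `x_i` has degree `p i`: the span of the images of the monomials of
weight `d`. -/
noncomputable def degCompR (k : Type*) [Field k] {n : ℕ}
    (rel : FreeAlgebra k (Fin n) → FreeAlgebra k (Fin n) → Prop)
    (p : Fin n → ℕ) (d : ℕ) : Submodule k (RingQuot rel) :=
  Submodule.span k {a | ∃ l : List (Fin n), (l.map p).sum = d ∧
    a = RingQuot.mkAlgHom k rel ((l.map (FreeAlgebra.ι k)).prod)}

/-- The Hilbert series of the quotient algebra. -/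
noncomputable def hilbertSeriesR (k : Type*) [Field k] {n : ℕ}
    (rel : FreeAlgebra k (Fin n) → FreeAlgebra k (Fin n) → Prop)
    (p : Fin n → ℕ) : PowerSeries ℤ :=
  PowerSeries.mk fun d => (Module.finrank k (degCompR k rel p d) : ℤ)

/-- The clique polynomial `c_Γ(z) = Σ_{i,j} (−1)^i c_{i,j} z^j`, where `c_{i,j}`
is the number of complete subgraphs of `Γ` with `i` vertices whose weights sum
to `j`, as a power series. -/
noncomputable def cliquePoly {n : ℕ} (G : SimpleGraph (Fin n)) (p : Fin n → ℕ) :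
    PowerSeries ℤ :=
  PowerSeries.mk fun j =>
    ∑ S ∈ (Finset.univ : Finset (Fin n)).powerset.filter
        (fun S : Finset (Fin n) => G.IsClique (S : Set (Fin n))),
      if ∑ i ∈ S, p i = j then (-1 : ℤ) ^ S.card else 0

/-- The signed commutation relations: for each edge `ab` of weight `q(ab)`,
`x_a x_b = (−1)^{q(ab)} x_b x_a`. -/
def signedRel (k : Type*) [Field k] {n : ℕ} (G : SimpleGraph (Fin n))
    (q : Sym2 (Fin n) → ZMod 2) :
    FreeAlgebra k (Fin n) → FreeAlgebra k (Fin n) → Prop := fun u v =>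
  ∃ a b : Fin n, G.Adj a b ∧ u = FreeAlgebra.ι k a * FreeAlgebra.ι k b ∧
    v = ((-1 : k) ^ (q s(a, b)).val) • (FreeAlgebra.ι k b * FreeAlgebra.ι k a)


/-!
Let `M` be the trace monoid of `Γ`: words in the vertices, up to commuting adjacent letters.
Fixing one word `w` per trace, the monomials `x_w` span `A`. They are also linearly
independent, because `A` acts on `k[M]`: `x_a` sends `[t]` to `±[a t]`, the sign being the
product of `(-1)^{q(ab)}` over the letters `b < a` of `t`. So `H_A` is the generating function
of traces by weight.

The identity `H_A · c_Γ = 1` is the Cartier–Foata inversion formula. The map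
`(S, m) ↦ (S m, S)` is a bijection from pairs (clique, trace) to pairs (trace `t`, set of
initial letters of `t`). Every nonempty trace has an initial letter, so in
`∑ (-1)^{|S|} z^{w(S) + w(m)}` the sum over subsets of the initial letters of `t` vanishes
unless `t` is empty.
-/

section TraceMonoid

variable {α : Type*}

namespace Trace

inductive Swap (G : SimpleGraph α) : List α → List α → Prop
  | swap {a b : α} (l : List α) : G.Adj a b → Swap G (a :: b :: l) (b :: a :: l)
  | cons (a : α) {l l' : List α} : Swap G l l' → Swap G (a :: l) (a :: l')

end Trace

/-- Letters adjacent in `G` commute: `G` is the commutation graph, not its complement. -/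
def Trace (G : SimpleGraph α) : Type _ := Quot (Trace.Swap G)

namespace Trace

variable {G : SimpleGraph α}

def mk (l : List α) : Trace G := Quot.mk _ l

def nil : Trace G := mk []

noncomputable def out (t : Trace G) : List α := Quot.out t

@[simp] lemma mk_out (t : Trace G) : mk t.out = t := Quot.out_eq t

@[elab_as_elim]
lemma ind {P : Trace G → Prop} (h : ∀ l, P (mk l)) (t : Trace G) : P t := Quot.ind h t

def cons (a : α) : Trace G → Trace G := Quot.map (a :: ·) fun _ _ => Swap.cons a

@[simp] lemma cons_mk (a : α) (l : List α) : cons a (mk l : Trace G) = mk (a :: l) := rfl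

lemma cons_cons_comm {a b : α} (h : G.Adj a b) (t : Trace G) :
    cons a (cons b t) = cons b (cons a t) := by
  induction t using ind with
  | h l => exact Quot.sound (Swap.swap l h)

def letters : Trace G → Multiset α :=
  Quot.lift (↑) fun _ _ h => Multiset.coe_eq_coe.mpr <| by
    induction h with
    | swap l _ => exact List.Perm.swap _ _ l
    | cons a _ ih => exact ih.cons a

@[simp] lemma letters_mk (l : List α) : letters (mk l : Trace G) = l := rfl

@[simp] lemma letters_cons (a : α) (t : Trace G) :
    (cons a t).letters = a ::ₘ t.letters := by
  induction t using ind with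
  | h l => rfl

def weight (p : α → ℕ) (t : Trace G) : ℕ := (t.letters.map p).sum

@[simp] lemma weight_mk (p : α → ℕ) (l : List α) :
    (mk l : Trace G).weight p = (l.map p).sum := by
  simp [weight]

@[simp] lemma weight_cons (p : α → ℕ) (a : α) (t : Trace G) :
    (cons a t).weight p = p a + t.weight p := by
  simp [weight]

lemma finite_setOf_weight_eq [Finite α] {p : α → ℕ} (hp : ∀ a, 0 < p a) (d : ℕ) :
    {t : Trace G | t.weight p = d}.Finite := by
  refine ((List.finite_length_le α d).image mk).subset fun t ht => ?_
  induction t using ind with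
  | h l =>
    refine ⟨l, ?_, rfl⟩
    calc l.length = (l.map p).length := (List.length_map _).symm
      _ ≤ (l.map p).sum := List.length_le_sum_of_one_le _ fun _ hx => by
          obtain ⟨a, -, rfl⟩ := List.mem_map.mp hx
          exact hp a
      _ = d := by simpa using ht

def CanLead (G : SimpleGraph α) (a : α) : List α → Prop
  | [] => False
  | b :: l => b = a ∨ G.Adj a b ∧ CanLead G a l

lemma canLead_iff_of_swap (a : α) {l l' : List α} (h : Swap G l l') :
    CanLead G a l ↔ CanLead G a l' := by
  induction h with
  | @swap b c l hbc =>
    have := hbc.ne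
    have := G.adj_symm hbc
    simp only [CanLead]
    constructor <;> rintro (rfl | ⟨hab, rfl | ⟨hac, h⟩⟩) <;> simp_all
  | cons b _ ih => simp only [CanLead, ih]

/-- `a` is an initial letter of `t`; see `IsHead.exists_eq_cons`. -/
def IsHead (a : α) : Trace G → Prop :=
  Quot.lift (CanLead G a) fun _ _ h => propext (canLead_iff_of_swap a h)

lemma isHead_cons_iff {a b : α} {t : Trace G} :
    IsHead a (cons b t) ↔ b = a ∨ G.Adj a b ∧ IsHead a t := by
  induction t using ind with
  | h l => rfl

lemma isHead_cons_self (a : α) (t : Trace G) : IsHead a (cons a t) :=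
  isHead_cons_iff.mpr (Or.inl rfl)

lemma not_isHead_nil (a : α) : ¬ IsHead a (nil : Trace G) := id

lemma IsHead.exists_eq_cons {a : α} {t : Trace G} (h : IsHead a t) : ∃ t', t = cons a t' := by
  induction t using ind with
  | h l =>
    induction l with
    | nil => exact absurd h (not_isHead_nil a)
    | cons b l ih =>
      rcases (isHead_cons_iff (t := mk l)).mp h with rfl | ⟨hab, hl⟩
      · exact ⟨mk l, rfl⟩
      · obtain ⟨t', ht'⟩ := ih hl
        exact ⟨cons b t', by rw [← cons_mk, ht', cons_cons_comm hab.symm]⟩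

lemma IsHead.adj {a b : α} {t : Trace G} (ha : IsHead a t) (hb : IsHead b t) (hab : a ≠ b) :
    G.Adj a b := by
  obtain ⟨t', rfl⟩ := ha.exists_eq_cons
  rcases isHead_cons_iff.mp hb with h | ⟨h, -⟩
  · exact absurd h hab
  · exact h.symm

lemma exists_isHead_of_ne_nil {t : Trace G} (h : t ≠ nil) : ∃ a, IsHead a t := by
  induction t using ind with
  | h l =>
    cases l with
    | nil => exact absurd rfl h
    | cons a l => exact ⟨a, isHead_cons_self a (mk l)⟩

def consList (l : List α) (t : Trace G) : Trace G := l.foldr cons t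

lemma weight_consList (p : α → ℕ) (l : List α) (t : Trace G) :
    (consList l t).weight p = (l.map p).sum + t.weight p := by
  induction l with
  | nil => simp [consList]
  | cons a l ih => simp_all [consList, add_assoc]

lemma isHead_consList {l : List α} (hl : l.Pairwise G.Adj) {a : α} (ha : a ∈ l) (t : Trace G) :
    IsHead a (consList l t) := by
  induction l with
  | nil => cases ha
  | cons b l ih =>
    rcases List.mem_cons.mp ha with rfl | ha
    · exact isHead_cons_self a _
    · exact isHead_cons_iff.mpr <|
        Or.inr ⟨(List.rel_of_pairwise_cons hl ha).symm, ih hl.of_cons ha⟩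

section Erase

variable [DecidableEq α]

lemma mk_erase_eq_of_swap (a : α) {l l' : List α} (h : Swap G l l') :
    (mk (l.erase a) : Trace G) = mk (l'.erase a) := by
  induction h with
  | @swap b c l hbc =>
    by_cases hb : b = a
    · subst hb; simp [hbc.ne.symm]
    by_cases hc : c = a
    · subst hc; simp [hb]
    simpa [hb, hc] using cons_cons_comm hbc (mk (l.erase a))
  | cons b hs ih =>
    by_cases hb : b = a
    · subst hb; rw [List.erase_cons_head, List.erase_cons_head]; exact Quot.sound hs
    · simpa [hb] using congrArg (cons b) ih

def erase (a : α) : Trace G → Trace G :=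
  Quot.lift (fun l => mk (l.erase a)) fun _ _ => mk_erase_eq_of_swap a

@[simp] lemma erase_cons_self (a : α) (t : Trace G) : (cons a t).erase a = t := by
  induction t using ind with
  | h l => exact congrArg mk (List.erase_cons_head a l)

lemma IsHead.cons_erase {a : α} {t : Trace G} (h : IsHead a t) : cons a (t.erase a) = t := by
  obtain ⟨t', rfl⟩ := h.exists_eq_cons
  rw [erase_cons_self]

lemma IsHead.erase {a b : α} {t : Trace G} (hb : IsHead b t) (ha : IsHead a t) (hab : a ≠ b) :
    IsHead b (t.erase a) := by
  obtain ⟨t', rfl⟩ := ha.exists_eq_cons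
  rw [erase_cons_self]
  exact ((isHead_cons_iff.mp hb).resolve_left hab).2

def eraseList (l : List α) (t : Trace G) : Trace G := l.foldl (fun t a => t.erase a) t

lemma eraseList_consList (l : List α) (t : Trace G) : eraseList l (consList l t) = t := by
  induction l with
  | nil => rfl
  | cons a l ih => simpa [eraseList, consList] using ih

lemma consList_eraseList {l : List α} (hl : l.Nodup) {t : Trace G} (h : ∀ a ∈ l, IsHead a t) :
    consList l (eraseList l t) = t := by
  induction l generalizing t with
  | nil => rfl
  | cons a l ih =>
    have ha : IsHead a t := h a List.mem_cons_self
    have hrest : ∀ b ∈ l, IsHead b (t.erase a) := fun b hb =>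
      (h b (List.mem_cons_of_mem a hb)).erase ha fun hab => (List.nodup_cons.mp hl).1 (hab ▸ hb)
    change cons a (consList l (eraseList l (t.erase a))) = t
    rw [ih (List.nodup_cons.mp hl).2 hrest, ha.cons_erase]

end Erase

section Fintype

variable [Fintype α]

noncomputable def heads (t : Trace G) : Finset α := Finset.univ.filter (IsHead · t)

@[simp] lemma mem_heads {a : α} {t : Trace G} : a ∈ heads t ↔ IsHead a t := by simp [heads]

lemma isClique_heads (t : Trace G) : G.IsClique (heads t : Set α) :=
  fun _ ha _ hb hab => IsHead.adj (mem_heads.mp ha) (mem_heads.mp hb) hab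

lemma heads_eq_empty_iff {t : Trace G} : heads t = ∅ ↔ t = nil := by
  refine ⟨fun h => by_contra fun ht => ?_, ?_⟩
  · obtain ⟨a, ha⟩ := exists_isHead_of_ne_nil ht
    exact Finset.notMem_empty a (h ▸ mem_heads.mpr ha)
  · rintro rfl
    simp [Finset.eq_empty_iff_forall_notMem, not_isHead_nil]

variable {p : α → ℕ}

noncomputable def weightFinset (hp : ∀ a, 0 < p a) (d : ℕ) : Finset (Trace G) :=
  (finite_setOf_weight_eq hp d).toFinset

@[simp] lemma mem_weightFinset {hp : ∀ a, 0 < p a} {d : ℕ} {t : Trace G} :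
    t ∈ weightFinset hp d ↔ t.weight p = d := by
  simp [weightFinset]

variable [DecidableEq α]

lemma sum_sigma_cliques_eq_sum_sigma_heads {M : Type*} [AddCommMonoid M] (f : Finset α → M)
    (hp : ∀ a, 0 < p a) (N : ℕ) :
    ∑ x ∈ ((Finset.univ.powerset.filter fun S : Finset α => G.IsClique (S : Set α)).filter
          fun S => ∑ a ∈ S, p a ≤ N).sigma
          fun S => weightFinset (G := G) hp (N - ∑ a ∈ S, p a), f x.1 =
      ∑ y ∈ (weightFinset (G := G) hp N).sigma fun t => (heads t).powerset, f y.2 := by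
  refine Finset.sum_nbij' (fun x => ⟨consList x.1.toList x.2, x.1⟩)
    (fun y => ⟨y.2, eraseList y.2.toList y.1⟩) ?_ ?_ ?_ ?_ fun _ _ => rfl
  · rintro ⟨S, t⟩ hSt
    simp only [Finset.mem_sigma, Finset.mem_filter, mem_weightFinset] at hSt
    obtain ⟨⟨⟨-, hS⟩, hSN⟩, ht⟩ := hSt
    have hSl : S.toList.Pairwise G.Adj := (Finset.nodup_toList S).pairwise_of_forall_ne
      fun a ha b hb hab => hS (by simpa using ha) (by simpa using hb) hab
    have hSw : (S.toList.map p).sum = ∑ a ∈ S, p a := Finset.sum_map_toList S p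
    simp only [Finset.mem_sigma, mem_weightFinset, weight_consList, hSw, Finset.mem_powerset]
    exact ⟨by omega, fun a ha => mem_heads.mpr (isHead_consList hSl (by simpa using ha) t)⟩
  · rintro ⟨t, U⟩ htU
    simp only [Finset.mem_sigma, mem_weightFinset, Finset.mem_powerset] at htU
    obtain ⟨ht, hU⟩ := htU
    have hw := congrArg (weight p) (consList_eraseList (Finset.nodup_toList U)
      fun a ha => mem_heads.mp (hU (Finset.mem_toList.mp ha)) : consList U.toList _ = t)
    have hUw : (U.toList.map p).sum = ∑ a ∈ U, p a := Finset.sum_map_toList U p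
    rw [weight_consList, hUw] at hw
    simp only [Finset.mem_sigma, Finset.mem_filter, Finset.mem_powerset, Finset.subset_univ,
      mem_weightFinset, true_and]
    exact ⟨⟨(isClique_heads t).subset (by simpa using hU), by omega⟩, by omega⟩
  · rintro ⟨S, t⟩ -
    simp [eraseList_consList]
  · rintro ⟨t, U⟩ htU
    simp only [Finset.mem_sigma, Finset.mem_powerset] at htU
    simp [consList_eraseList (Finset.nodup_toList U) fun a ha =>
      mem_heads.mp (htU.2 (Finset.mem_toList.mp ha))]

lemma sum_cliques_neg_one_pow_mul_ncard (hp : ∀ a, 0 < p a) (N : ℕ) :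
    ∑ S ∈ (Finset.univ.powerset.filter fun S : Finset α => G.IsClique (S : Set α)).filter
        (fun S => ∑ a ∈ S, p a ≤ N),
      (-1 : ℤ) ^ S.card * {t : Trace G | t.weight p = N - ∑ a ∈ S, p a}.ncard =
    if N = 0 then 1 else 0 := by
  set K := (Finset.univ.powerset.filter fun S : Finset α => G.IsClique (S : Set α)).filter
    fun S => ∑ a ∈ S, p a ≤ N
  calc _ = ∑ x ∈ K.sigma fun S => weightFinset (G := G) hp (N - ∑ a ∈ S, p a),
          (-1 : ℤ) ^ x.1.card := by
        rw [Finset.sum_sigma]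
        refine Finset.sum_congr rfl fun S _ => ?_
        simp [Set.ncard_eq_toFinset_card _ (finite_setOf_weight_eq hp _), weightFinset, mul_comm]
    _ = ∑ y ∈ (weightFinset hp N).sigma fun t => (heads t).powerset, (-1 : ℤ) ^ y.2.card :=
        sum_sigma_cliques_eq_sum_sigma_heads (fun S => (-1 : ℤ) ^ S.card) hp N
    _ = ∑ t ∈ weightFinset hp N, if t = nil then 1 else 0 := by
        rw [Finset.sum_sigma]
        refine Finset.sum_congr rfl fun t _ => ?_
        simp [Finset.sum_powerset_neg_one_pow_card, heads_eq_empty_iff]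
    _ = if N = 0 then 1 else 0 := by
        rw [Finset.sum_ite_eq']
        simp [nil, @eq_comm _ 0 N]

end Fintype

end Trace

noncomputable def traceSeries (G : SimpleGraph α) (p : α → ℕ) : PowerSeries ℤ :=
  PowerSeries.mk fun d => ({t : Trace G | t.weight p = d}.ncard : ℤ)

end TraceMonoid

def FreeAlgebra.word (k : Type*) [CommSemiring k] {ι : Type*} (l : List ι) : FreeAlgebra k ι :=
  (l.map (FreeAlgebra.ι k)).prod

lemma FreeAlgebra.word_cons (k : Type*) [CommSemiring k] {ι : Type*} (a : ι) (l : List ι) :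
    FreeAlgebra.word k (a :: l) = FreeAlgebra.ι k a * FreeAlgebra.word k l := by
  simp [FreeAlgebra.word]

namespace signedRel

open Trace

variable (k : Type*) [Field k] {n : ℕ} (G : SimpleGraph (Fin n)) (q : Sym2 (Fin n) → ZMod 2)

local notation "π" => RingQuot.mkAlgHom k (signedRel k G q)

lemma span_mk_word_eq_of_swap {l l' : List (Fin n)} (h : Swap G l l') :
    (k ∙ π (FreeAlgebra.word k l)) = k ∙ π (FreeAlgebra.word k l') := by
  induction h with
  | @swap a b l hab =>
    have hrel : π (FreeAlgebra.ι k a * FreeAlgebra.ι k b) =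
        (-1 : k) ^ (q s(a, b)).val • π (FreeAlgebra.ι k b * FreeAlgebra.ι k a) := by
      rw [← map_smul]
      exact RingQuot.mkAlgHom_rel k ⟨a, b, hab, rfl, rfl⟩
    have hword : ∀ c d, π (FreeAlgebra.word k (c :: d :: l)) =
        π (FreeAlgebra.ι k c * FreeAlgebra.ι k d) * π (FreeAlgebra.word k l) := by
      intro c d
      simp [FreeAlgebra.word, mul_assoc]
    rw [hword, hword, hrel, smul_mul_assoc,
      Submodule.span_singleton_smul_eq ((isUnit_one.neg).pow _)]
  | cons a _ ih =>
    set f := LinearMap.mulLeft k (π (FreeAlgebra.ι k a))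
    have hword : ∀ l, (k ∙ π (FreeAlgebra.word k (a :: l))) =
        (k ∙ π (FreeAlgebra.word k l)).map f := by
      intro l
      simp [Submodule.map_span, f, FreeAlgebra.word]
    rw [hword, hword, ih]

lemma span_mk_word_eq_span_mk_word_out (l : List (Fin n)) :
    (k ∙ π (FreeAlgebra.word k l)) = k ∙ π (FreeAlgebra.word k (mk l : Trace G).out) := by
  let line : Trace G → Submodule k (RingQuot (signedRel k G q)) :=
    Quot.lift (fun l => k ∙ π (FreeAlgebra.word k l)) fun _ _ => span_mk_word_eq_of_swap k G q
  exact congrArg line (mk_out (mk l)).symm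

/-- Only letters `b < a` contribute, so that exactly one of `x_a x_b`, `x_b x_a` picks up the
sign `(-1)^{q(ab)}`. -/
def edgeSign (a b : Fin n) : k := if b < a then (-1) ^ (q s(a, b)).val else 1

lemma edgeSign_ne_zero (a b : Fin n) : edgeSign k q a b ≠ 0 := by
  unfold edgeSign
  split_ifs <;> simp

lemma edgeSign_eq_mul {a b : Fin n} (hab : a ≠ b) :
    edgeSign k q a b = (-1) ^ (q s(a, b)).val * edgeSign k q b a := by
  rcases hab.lt_or_gt with h | h
  · simp [edgeSign, h, h.not_gt, Sym2.eq_swap, ← pow_add, ← two_mul, pow_mul]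
  · simp [edgeSign, h, h.not_gt]

def twist (a : Fin n) (t : Trace G) : k := (t.letters.map (edgeSign k q a)).prod

lemma twist_ne_zero (a : Fin n) (t : Trace G) : twist k G q a t ≠ 0 :=
  Multiset.prod_ne_zero fun h => by
    obtain ⟨b, -, hb⟩ := Multiset.mem_map.mp h
    exact edgeSign_ne_zero k q a b hb

lemma twist_cons (a b : Fin n) (t : Trace G) :
    twist k G q a (cons b t) = edgeSign k q a b * twist k G q a t := by
  simp [twist]

noncomputable def letterOp (a : Fin n) : Module.End k (Trace G →₀ k) :=
  Finsupp.lsum k fun t => twist k G q a t • Finsupp.lsingle (cons a t)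

lemma letterOp_single (a : Fin n) (t : Trace G) (x : k) :
    letterOp k G q a (Finsupp.single t x) = Finsupp.single (cons a t) (twist k G q a t * x) := by
  simp [letterOp, Finsupp.smul_single]

lemma letterOp_mul_letterOp {a b : Fin n} (hab : G.Adj a b) :
    letterOp k G q a * letterOp k G q b =
      (-1 : k) ^ (q s(a, b)).val • (letterOp k G q b * letterOp k G q a) := by
  refine Finsupp.lhom_ext fun t x => ?_
  simp only [Module.End.mul_apply, LinearMap.smul_apply, letterOp_single, twist_cons,
    cons_cons_comm hab, Finsupp.smul_single, smul_eq_mul, edgeSign_eq_mul k q hab.ne]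
  ring_nf

noncomputable def traceRep : RingQuot (signedRel k G q) →ₐ[k] Module.End k (Trace G →₀ k) :=
  RingQuot.liftAlgHom k ⟨FreeAlgebra.lift k (letterOp k G q), by
    rintro _ _ ⟨a, b, hab, rfl, rfl⟩
    simp [letterOp_mul_letterOp k G q hab]⟩

lemma traceRep_mk_word (l : List (Fin n)) :
    ∃ c ≠ 0, traceRep k G q (π (FreeAlgebra.word k l)) (Finsupp.single nil 1) =
      Finsupp.single (mk l) c := by
  induction l with
  | nil => exact ⟨1, one_ne_zero, by simp [FreeAlgebra.word, nil]⟩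
  | cons a l ih =>
    obtain ⟨c, hc, h⟩ := ih
    refine ⟨twist k G q a (mk l) * c, mul_ne_zero (twist_ne_zero k G q a _) hc, ?_⟩
    rw [FreeAlgebra.word_cons, map_mul, map_mul, Module.End.mul_apply, h]
    simp [traceRep, letterOp_single]

lemma linearIndependent_mk_word_out :
    LinearIndependent k fun t : Trace G => π (FreeAlgebra.word k t.out) := by
  choose c hc0 hc using fun t : Trace G => traceRep_mk_word k G q t.out
  let evalNil := (LinearMap.applyₗ (Finsupp.single nil 1)).comp (traceRep k G q).toLinearMap
  have hcomp : evalNil ∘ (fun t : Trace G => π (FreeAlgebra.word k t.out)) =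
      fun t => Finsupp.single t (c t) :=
    funext fun t => by simpa [evalNil] using hc t
  exact .of_comp evalNil (hcomp ▸ Finsupp.linearIndependent_single_of_ne_zero hc0)

theorem finrank_degCompR {p : Fin n → ℕ} (hp : ∀ i, 0 < p i) (d : ℕ) :
    Module.finrank k (degCompR k (signedRel k G q) p d) =
      {t : Trace G | t.weight p = d}.ncard := by
  set s := {t : Trace G | t.weight p = d}
  have : Fintype s := (finite_setOf_weight_eq hp d).fintype
  let f : s → RingQuot (signedRel k G q) := fun t => π (FreeAlgebra.word k t.1.out)
  have hspan : degCompR k (signedRel k G q) p d = Submodule.span k (Set.range f) := by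
    refine le_antisymm (Submodule.span_le.mpr ?_) (Submodule.span_le.mpr ?_)
    · rintro _ ⟨l, hl, rfl⟩
      have hmem : π (FreeAlgebra.word k l) ∈ k ∙ f ⟨mk l, by simpa [s] using hl⟩ := by
        rw [← span_mk_word_eq_span_mk_word_out]
        exact Submodule.mem_span_singleton_self _
      exact Submodule.span_mono (by simp) hmem
    · rintro _ ⟨t, rfl⟩
      refine Submodule.subset_span ⟨t.1.out, ?_, rfl⟩
      rw [← weight_mk (G := G), mk_out]
      exact t.2
  have hf : LinearIndependent k f :=
    (linearIndependent_mk_word_out k G q).comp _ Subtype.val_injective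
  rw [hspan, finrank_span_eq_card hf, ← Nat.card_eq_fintype_card, Nat.card_coe_set_eq]

end signedRel

lemma hilbertSeriesR_signedRel (k : Type*) [Field k] {n : ℕ} (G : SimpleGraph (Fin n))
    (q : Sym2 (Fin n) → ZMod 2) {p : Fin n → ℕ} (hp : ∀ i, 0 < p i) :
    hilbertSeriesR k (signedRel k G q) p = traceSeries G p := by
  ext d
  simp [hilbertSeriesR, traceSeries, signedRel.finrank_degCompR k G q hp]

lemma cliquePoly_eq_sum {n : ℕ} (G : SimpleGraph (Fin n)) (p : Fin n → ℕ) :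
    cliquePoly G p =
      ∑ S ∈ Finset.univ.powerset.filter fun S : Finset (Fin n) => G.IsClique (S : Set (Fin n)),
        PowerSeries.C ((-1 : ℤ) ^ S.card) * PowerSeries.X ^ (∑ i ∈ S, p i) := by
  ext j
  simp only [cliquePoly, PowerSeries.coeff_mk, map_sum, PowerSeries.coeff_C_mul_X_pow, eq_comm]

theorem traceSeries_mul_cliquePoly {n : ℕ} (G : SimpleGraph (Fin n)) {p : Fin n → ℕ}
    (hp : ∀ i, 0 < p i) : traceSeries G p * cliquePoly G p = 1 := by
  ext N
  rw [cliquePoly_eq_sum, Finset.mul_sum, map_sum, PowerSeries.coeff_one,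
    ← Trace.sum_cliques_neg_one_pow_mul_ncard (G := G) hp N,
    Finset.sum_filter (fun S => ∑ a ∈ S, p a ≤ N)]
  refine Finset.sum_congr rfl fun S _ => ?_
  rw [mul_left_comm, PowerSeries.coeff_C_mul, PowerSeries.coeff_mul_X_pow', mul_ite, mul_zero]
  simp [traceSeries]

theorem stmt_6_general (k : Type*) [Field k] {n : ℕ}
    (G : SimpleGraph (Fin n)) (p : Fin n → ℕ) (hp : ∀ i, 0 < p i)
    (q : Sym2 (Fin n) → ZMod 2) :
    hilbertSeriesR k (signedRel k G q) p * cliquePoly G p = 1 := by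
  rw [hilbertSeriesR_signedRel k G q hp, traceSeries_mul_cliquePoly G hp]

/-- **Main theorem (generalized).** For any finite simple graph with positive
integer vertex weights `p` and edge weights `q : E → ℤ/2`, the graded algebra
`A = k⟨x_i⟩/(x_a x_b − (−1)^{q(ab)} x_b x_a : ab ∈ E)` has Hilbert series the
inverse of the clique polynomial `c_Γ(z)`; in particular it is independent of
the choice of the `q`'s. -/
theorem stmt_6 (k : Type*) [Field k] (hchar : ringChar k ≠ 2) {n : ℕ}
    (G : SimpleGraph (Fin n)) (p : Fin n → ℕ) (hp : ∀ i, 0 < p i)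
    (q : Sym2 (Fin n) → ZMod 2) :
    hilbertSeriesR k (signedRel k G q) p * cliquePoly G p = 1 :=
  stmt_6_general k G p hp q
end

section
/- Let Γ be a finite simple graph with positive integer vertex weights p_i; for each edge j set q_j = p_{a_j} + p_{b_j}. Then the identity 1 − Σ_{i∈V} z^{p_i} + Σ_{j∈E} z^{q_j} = c_Γ(z) holds (as polynomials) if and only if Γ contains no triangle (3-cycle). -/
open scoped Classical
open Polynomial

/-- The clique polynomial of a vertex-weighted graph, as a polynomial:
`c_Γ(z) = Σ_S (−1)^{|S|} z^{weight S}` over all complete subgraphs `S`. -/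
noncomputable def cliquePolynomial {n : ℕ} (G : SimpleGraph (Fin n)) (p : Fin n → ℕ) :
    Polynomial ℤ :=
  ∑ S ∈ (Finset.univ : Finset (Fin n)).powerset.filter
      (fun S : Finset (Fin n) => G.IsClique (S : Set (Fin n))),
    Polynomial.C ((-1 : ℤ) ^ S.card) * Polynomial.X ^ (∑ i ∈ S, p i)

/-- Let `Γ` have positive integer vertex weights `p i`, and give each edge `j`
(i.e. each adjacent pair, equivalently each 2-vertex complete subgraph) the
weight `q_j = p_{a_j} + p_{b_j}`.  Then
`1 − Σ_{i ∈ V} z^{p i} + Σ_{j ∈ E} z^{q_j} = c_Γ(z)` holds as polynomials if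
and only if `Γ` contains no triangle. -/
theorem stmt_7 {n : ℕ} (G : SimpleGraph (Fin n)) (p : Fin n → ℕ) (hp : ∀ i, 0 < p i) :
    (1 - ∑ i : Fin n, (Polynomial.X : Polynomial ℤ) ^ p i +
      ∑ S ∈ (Finset.univ : Finset (Fin n)).powerset.filter
        (fun S : Finset (Fin n) => S.card = 2 ∧ G.IsClique (S : Set (Fin n))),
        (Polynomial.X : Polynomial ℤ) ^ (∑ i ∈ S, p i)) = cliquePolynomial G p ↔
    G.CliqueFree 3 := by
  classical
  set A := (Finset.univ : Finset (Fin n)).powerset.filter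
      (fun S : Finset (Fin n) => G.IsClique (S : Set (Fin n))) with hA
  set f : Finset (Fin n) → Polynomial ℤ :=
      fun S => Polynomial.C ((-1 : ℤ) ^ S.card) * Polynomial.X ^ (∑ i ∈ S, p i) with hf
  set D := A.filter (fun S => 3 ≤ S.card) with hD
  have memD : ∀ S, S ∈ D ↔ G.IsClique (S : Set (Fin n)) ∧ 3 ≤ S.card := by
    intro S
    simp [hD, hA, Finset.mem_filter, Finset.mem_powerset, and_assoc]
  -- Decomposition of the clique polynomial
  have hdecomp : cliquePolynomial G p =
      (1 - ∑ i : Fin n, (Polynomial.X : Polynomial ℤ) ^ p i +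
        ∑ S ∈ (Finset.univ : Finset (Fin n)).powerset.filter
          (fun S : Finset (Fin n) => S.card = 2 ∧ G.IsClique (S : Set (Fin n))),
          (Polynomial.X : Polynomial ℤ) ^ (∑ i ∈ S, p i)) +
      ∑ S ∈ D, f S := by
    have h0 : ∑ S ∈ A.filter (fun S => S.card = 0), f S = 1 := by
      have : A.filter (fun S => S.card = 0) = {∅} := by
        ext S
        simp [hA, Finset.mem_filter, Finset.card_eq_zero]
        rintro rfl
        simp
      rw [this]
      simp [hf]
    have h1 : ∑ S ∈ A.filter (fun S => S.card = 1), f S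
        = -∑ i : Fin n, (Polynomial.X : Polynomial ℤ) ^ p i := by
      have himg : A.filter (fun S => S.card = 1)
          = Finset.univ.image (fun i : Fin n => ({i} : Finset (Fin n))) := by
        ext S
        simp only [hA, Finset.mem_filter, Finset.mem_powerset, Finset.mem_image,
          Finset.mem_univ, true_and, Finset.card_eq_one]
        constructor
        · rintro ⟨⟨-, -⟩, i, rfl⟩
          exact ⟨i, rfl⟩
        · rintro ⟨i, rfl⟩
          exact ⟨⟨Finset.subset_univ _, by simp [SimpleGraph.isClique_singleton]⟩, i, rfl⟩
      rw [himg, Finset.sum_image (by intro a _ b _ h; simpa using h)]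
      simp [hf]
    have h2 : ∑ S ∈ A.filter (fun S => S.card = 2), f S
        = ∑ S ∈ (Finset.univ : Finset (Fin n)).powerset.filter
            (fun S : Finset (Fin n) => S.card = 2 ∧ G.IsClique (S : Set (Fin n))),
            (Polynomial.X : Polynomial ℤ) ^ (∑ i ∈ S, p i) := by
      have hset : A.filter (fun S => S.card = 2)
          = (Finset.univ : Finset (Fin n)).powerset.filter
            (fun S : Finset (Fin n) => S.card = 2 ∧ G.IsClique (S : Set (Fin n))) := by
        ext S
        simp [hA, Finset.mem_filter, and_comm, and_assoc]
      rw [hset]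
      refine Finset.sum_congr rfl ?_
      intro S hS
      have hc : S.card = 2 := (Finset.mem_filter.mp hS).2.1
      simp [hf, hc]
    have split1 : ∑ S ∈ A, f S
        = ∑ S ∈ A.filter (fun S => S.card = 0), f S
          + ∑ S ∈ A.filter (fun S => ¬ S.card = 0), f S :=
      (Finset.sum_filter_add_sum_filter_not A _ f).symm
    have e21 : (A.filter (fun S => ¬ S.card = 0)).filter (fun S => S.card = 1)
        = A.filter (fun S => S.card = 1) := by
      ext S
      simp only [Finset.mem_filter]
      constructor
      · rintro ⟨⟨h, -⟩, h1⟩; exact ⟨h, h1⟩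
      · rintro ⟨h, h1⟩; exact ⟨⟨h, by omega⟩, h1⟩
    have e22 : (A.filter (fun S => ¬ S.card = 0)).filter (fun S => ¬ S.card = 1)
        = A.filter (fun S => ¬ S.card = 0 ∧ ¬ S.card = 1) := by
      ext S
      simp only [Finset.mem_filter]
      constructor
      · rintro ⟨⟨h, h0'⟩, h1⟩; exact ⟨h, h0', h1⟩
      · rintro ⟨h, h0', h1⟩; exact ⟨⟨h, h0'⟩, h1⟩
    have split2 : ∑ S ∈ A.filter (fun S => ¬ S.card = 0), f S
        = ∑ S ∈ A.filter (fun S => S.card = 1), f S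
          + ∑ S ∈ A.filter (fun S => ¬ S.card = 0 ∧ ¬ S.card = 1), f S := by
      rw [← Finset.sum_filter_add_sum_filter_not (A.filter (fun S => ¬ S.card = 0))
        (fun S => S.card = 1) f, e21, e22]
    have e31 : (A.filter (fun S => ¬ S.card = 0 ∧ ¬ S.card = 1)).filter
          (fun S => S.card = 2) = A.filter (fun S => S.card = 2) := by
      ext S
      simp only [Finset.mem_filter]
      constructor
      · rintro ⟨⟨h, -⟩, h2'⟩; exact ⟨h, h2'⟩
      · rintro ⟨h, h2'⟩; exact ⟨⟨h, by omega, by omega⟩, h2'⟩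
    have e32 : (A.filter (fun S => ¬ S.card = 0 ∧ ¬ S.card = 1)).filter
          (fun S => ¬ S.card = 2) = D := by
      rw [hD]
      ext S
      simp only [Finset.mem_filter]
      constructor
      · rintro ⟨⟨h, h0', h1'⟩, h2'⟩; exact ⟨h, by omega⟩
      · rintro ⟨h, h3⟩; exact ⟨⟨h, by omega, by omega⟩, by omega⟩
    have split3 : ∑ S ∈ A.filter (fun S => ¬ S.card = 0 ∧ ¬ S.card = 1), f S
        = ∑ S ∈ A.filter (fun S => S.card = 2), f S + ∑ S ∈ D, f S := by
      rw [← Finset.sum_filter_add_sum_filter_not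
        (A.filter (fun S => ¬ S.card = 0 ∧ ¬ S.card = 1))
        (fun S => S.card = 2) f, e31, e32]
    have : cliquePolynomial G p = ∑ S ∈ A, f S := rfl
    rw [this, split1, split2, split3, h0, h1, h2]
    ring
  constructor
  · -- equality → triangle-free
    intro h
    have hsum0 : ∑ S ∈ D, f S = 0 := by
      have : (1 - ∑ i : Fin n, (Polynomial.X : Polynomial ℤ) ^ p i +
          ∑ S ∈ (Finset.univ : Finset (Fin n)).powerset.filter
            (fun S : Finset (Fin n) => S.card = 2 ∧ G.IsClique (S : Set (Fin n))),
            (Polynomial.X : Polynomial ℤ) ^ (∑ i ∈ S, p i)) =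
          (1 - ∑ i : Fin n, (Polynomial.X : Polynomial ℤ) ^ p i +
          ∑ S ∈ (Finset.univ : Finset (Fin n)).powerset.filter
            (fun S : Finset (Fin n) => S.card = 2 ∧ G.IsClique (S : Set (Fin n))),
            (Polynomial.X : Polynomial ℤ) ^ (∑ i ∈ S, p i)) + ∑ S ∈ D, f S := by
        conv_lhs => rw [h, hdecomp]
      exact (left_eq_add.mp this)
    by_contra hnot
    rw [SimpleGraph.CliqueFree] at hnot
    push_neg at hnot
    obtain ⟨t, ht⟩ := hnot
    have htD : t ∈ D := (memD t).mpr ⟨ht.isClique, le_of_eq ht.card_eq.symm⟩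
    obtain ⟨S0, hS0D, hS0min⟩ :=
      Finset.exists_min_image D (fun S => ∑ i ∈ S, p i) ⟨t, htD⟩
    set j0 := ∑ i ∈ S0, p i with hj0
    -- every S ∈ D of weight j0 has exactly 3 vertices
    have hcard3 : ∀ S ∈ D, (∑ i ∈ S, p i) = j0 → S.card = 3 := by
      intro S hS hw
      obtain ⟨hcl, h3⟩ := (memD S).mp hS
      by_contra hne
      obtain ⟨T, hTS, hT3⟩ := Finset.exists_subset_card_eq h3
      have hTD : T ∈ D := (memD T).mpr
        ⟨hcl.subset (Finset.coe_subset.mpr hTS), le_of_eq hT3.symm⟩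
      obtain ⟨x, hxS, hxT⟩ : ∃ x ∈ S, x ∉ T := by
        by_contra hc
        push_neg at hc
        have := Finset.card_le_card (fun y hy => hc y hy)
        omega
      have hlt : (∑ i ∈ T, p i) < ∑ i ∈ S, p i :=
        Finset.sum_lt_sum_of_subset hTS hxS hxT (hp x) (fun j _ _ => Nat.zero_le _)
      have := hS0min T hTD
      omega
    -- the coefficient of X^j0 in the tail sum is nonzero
    have hc := congrArg (fun q => q.coeff j0) hsum0
    simp only [Polynomial.finset_sum_coeff, Polynomial.coeff_zero] at hc
    have hterm : ∀ S ∈ D, (f S).coeff j0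
        = if (∑ i ∈ S, p i) = j0 then (-1 : ℤ) ^ S.card else 0 := by
      intro S _
      simp only [hf, Polynomial.coeff_C_mul, Polynomial.coeff_X_pow]
      by_cases hwS : (∑ i ∈ S, p i) = j0
      · simp [hwS]
      · simp [hwS, Ne.symm hwS]
    rw [Finset.sum_congr rfl hterm, ← Finset.sum_filter] at hc
    have hval : ∑ S ∈ D.filter (fun S => (∑ i ∈ S, p i) = j0), ((-1 : ℤ) ^ S.card)
        = - ((D.filter (fun S => (∑ i ∈ S, p i) = j0)).card : ℤ) := by
      rw [Finset.sum_congr rfl (fun S hS => by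
        obtain ⟨hSD, hSw⟩ := Finset.mem_filter.mp hS
        rw [hcard3 S hSD hSw]), Finset.sum_const]
      simp
    rw [hval] at hc
    have hne : S0 ∈ D.filter (fun S => (∑ i ∈ S, p i) = j0) :=
      Finset.mem_filter.mpr ⟨hS0D, rfl⟩
    have : 0 < (D.filter (fun S => (∑ i ∈ S, p i) = j0)).card :=
      Finset.card_pos.mpr ⟨S0, hne⟩
    omega
  · -- triangle-free → equality
    intro h
    have hDempty : D = ∅ := by
      rw [Finset.eq_empty_iff_forall_notMem]
      intro S hS
      obtain ⟨hcl, h3⟩ := (memD S).mp hS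
      obtain ⟨T, hTS, hT3⟩ := Finset.exists_subset_card_eq h3
      exact h T ⟨hcl.subset (Finset.coe_subset.mpr hTS), hT3⟩
    rw [hdecomp, hDempty]
    simp
end

section
/- Let L be a free graded Lie algebra over a field k of characteristic ≠ 2 on generators x_1,…,x_n of positive degrees, and let L' be the Lie subalgebra generated by a family of elements g_j = [x_{a_j}, x_{b_j}] (graded Lie brackets of distinct generators, indexed by edges of a simple graph). If the canonical surjection from the free graded Lie algebra on symbols indexed by the edges onto L' is an isomorphism (which holds since any subalgebra of a free graded Lie algebra is free), then the induced map of associative algebras k⟨y_j : j ∈ E⟩ → B, where B is the subalgebra of the tensor algebra T(x_1,…,x_n) generated by the elements [x_{a_j}, x_{b_j}], is an isomorphism. -/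
open scoped Classical

/-- The graded commutator `[x_a, x_b] = x_a x_b − (−1)^{|x_a||x_b|} x_b x_a`
in the tensor algebra `T = k⟨x_1,…,x_n⟩`, for generators of degrees `p`. -/
def gradedComm (k : Type*) [Field k] {n : ℕ} (p : Fin n → ℕ) (a b : Fin n) :
    FreeAlgebra k (Fin n) :=
  FreeAlgebra.ι k a * FreeAlgebra.ι k b -
    ((-1 : k) ^ (p a * p b)) • (FreeAlgebra.ι k b * FreeAlgebra.ι k a)

/-!
Let `Φ : k⟨y_j⟩ → k⟨x_i⟩` send `y_j` to `x_{u j} x_{v j} - c_j x_{v j} x_{u j}`, where the ordered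
pairs `(u j, v j)` are distinct and no pair is the reverse of another (for the edges of a simple
graph, orient each edge once). A left inverse of `Φ` is the linear map that reads a word in the
`x_i` as a concatenation of the two-letter words `x_{u j} x_{v j}`, sending it to the
corresponding word in the `y_j`, and sends every word that does not parse this way to `0`. Such a
parse is unique, and a word starting with `x_{v j} x_{u j}` never parses, so this map `ρ`
satisfies `ρ (Φ y_j * t) = y_j * ρ t`; hence `ρ (Φ x * t) = x * ρ t` for all `x`, and
`ρ ∘ Φ = id`.
-/

namespace FreeAlgebra

variable {R : Type*} [CommRing R] {X E : Type*}

theorem basisFreeMonoid_apply (w : FreeMonoid X) :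
    basisFreeMonoid R X w = FreeMonoid.lift (ι R) w := by
  simp [basisFreeMonoid, equivMonoidAlgebraFreeMonoid]

variable (R) in
noncomputable def twistedComm (c : R) (x y : X) : FreeAlgebra R X :=
  ι R x * ι R y - c • (ι R y * ι R x)

variable (R) (u v : E → X)

noncomputable def parsePairs : List X → FreeAlgebra R E
  | [] => 1
  | [_] => 0
  | x :: y :: w =>
    match Function.partialInv (fun j => (u j, v j)) (x, y) with
    | some j => ι R j * parsePairs w
    | none => 0

noncomputable def pairRetraction : FreeAlgebra R X →ₗ[R] FreeAlgebra R E :=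
  (basisFreeMonoid R X).constr R fun w => parsePairs R u v w.toList

variable {R u v}

theorem parsePairs_pair (hinj : Function.Injective fun j => (u j, v j)) (j : E) (w : List X) :
    parsePairs R u v (u j :: v j :: w) = ι R j * parsePairs R u v w := by
  rw [parsePairs, Function.partialInv_left hinj]

theorem parsePairs_swap (hswap : ∀ i j, (u i, v i) ≠ (v j, u j)) (j : E) (w : List X) :
    parsePairs R u v (v j :: u j :: w) = 0 := by
  have : Function.partialInv (fun j => (u j, v j)) (v j, u j) = none :=
    dif_neg fun ⟨i, hi⟩ => hswap i j hi
  rw [parsePairs, this]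

theorem pairRetraction_basisFreeMonoid (w : FreeMonoid X) :
    pairRetraction R u v (basisFreeMonoid R X w) = parsePairs R u v w.toList :=
  (basisFreeMonoid R X).constr_basis R _ w

theorem pairRetraction_one : pairRetraction R u v 1 = 1 := by
  rw [← map_one (FreeMonoid.lift (ι R)), ← basisFreeMonoid_apply,
    pairRetraction_basisFreeMonoid]
  rfl

variable (c : E → R)

theorem pairRetraction_twistedComm_mul (hinj : Function.Injective fun j => (u j, v j))
    (hswap : ∀ i j, (u i, v i) ≠ (v j, u j)) (j : E) (t : FreeAlgebra R X) :
    pairRetraction R u v (twistedComm R (c j) (u j) (v j) * t) =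
      ι R j * pairRetraction R u v t := by
  suffices pairRetraction R u v ∘ₗ LinearMap.mulLeft R (twistedComm R (c j) (u j) (v j)) =
      LinearMap.mulLeft R (ι R j) ∘ₗ pairRetraction R u v from LinearMap.congr_fun this t
  refine (basisFreeMonoid R X).ext fun w => ?_
  have hmul : twistedComm R (c j) (u j) (v j) * basisFreeMonoid R X w =
      basisFreeMonoid R X (.of (u j) * .of (v j) * w) -
        c j • basisFreeMonoid R X (.of (v j) * .of (u j) * w) := by
    simp only [twistedComm, basisFreeMonoid_apply, map_mul, FreeMonoid.lift_eval_of, sub_mul,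
      smul_mul_assoc]
  simp only [LinearMap.comp_apply, LinearMap.mulLeft_apply, hmul, map_sub, map_smul,
    pairRetraction_basisFreeMonoid]
  change parsePairs R u v (u j :: v j :: w.toList) -
    c j • parsePairs R u v (v j :: u j :: w.toList) = _
  rw [parsePairs_pair hinj, parsePairs_swap hswap, smul_zero, sub_zero]

theorem pairRetraction_lift_twistedComm_mul (hinj : Function.Injective fun j => (u j, v j))
    (hswap : ∀ i j, (u i, v i) ≠ (v j, u j))
    (x : FreeAlgebra R E) (t : FreeAlgebra R X) :
    pairRetraction R u v (lift R (fun j => twistedComm R (c j) (u j) (v j)) x * t) =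
      x * pairRetraction R u v t := by
  induction x generalizing t with
  | grade0 r => rw [AlgHom.commutes, ← Algebra.smul_def, ← Algebra.smul_def, map_smul]
  | grade1 j => rw [lift_ι_apply, pairRetraction_twistedComm_mul c hinj hswap]
  | mul x y hx hy => rw [_root_.map_mul (lift R _), mul_assoc, hx, hy, mul_assoc]
  | add x y hx hy => rw [map_add, add_mul, map_add, hx, hy, add_mul]

theorem lift_twistedComm_injective (hinj : Function.Injective fun j => (u j, v j))
    (hswap : ∀ i j, (u i, v i) ≠ (v j, u j)) :
    Function.Injective (lift R fun j => twistedComm R (c j) (u j) (v j)) :=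
  Function.LeftInverse.injective (g := pairRetraction R u v) fun x => by
    simpa [pairRetraction_one] using pairRetraction_lift_twistedComm_mul c hinj hswap x 1

end FreeAlgebra

theorem stmt_12_general (k : Type*) [Field k] {n : ℕ}
    (p : Fin n → ℕ) {E : Type*} (a b : E → Fin n)
    (hab : ∀ j, a j ≠ b j)
    (hdist : ∀ i j : E, i ≠ j → s(a i, b i) ≠ s(a j, b j)) :
    Function.Injective
      (FreeAlgebra.lift k (fun j : E => gradedComm k p (a j) (b j))) ∧
    (FreeAlgebra.lift k (fun j : E => gradedComm k p (a j) (b j))).range =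
      Algebra.adjoin k (Set.range fun j : E => gradedComm k p (a j) (b j)) := by
  have hinj : Function.Injective fun j => (a j, b j) := fun i j h => by
    obtain ⟨ha, hb⟩ := Prod.mk.inj h
    by_contra hne
    exact hdist i j hne (by rw [ha, hb])
  have hswap : ∀ i j, (a i, b i) ≠ (b j, a j) := by
    intro i j h
    obtain ⟨ha, hb⟩ := Prod.mk.inj h
    obtain rfl | hne := eq_or_ne i j
    · exact hab i ha
    · exact hdist i j hne (by rw [ha, hb, Sym2.eq_swap])
  exact ⟨FreeAlgebra.lift_twistedComm_injective (fun j => (-1 : k) ^ (p (a j) * p (b j)))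
    hinj hswap, (Algebra.adjoin_range_eq_range_freeAlgebra_lift _ _ _).symm⟩

/-- **(Lemma: bijection.)** Let `E` index the edges of a finite simple graph
on the vertices `1,…,n` (so the endpoints of an edge are distinct, and
distinct edges have distinct endpoint pairs), and let the generator `x_i` of
the tensor algebra `T = k⟨x_1,…,x_n⟩` have positive degree `p i`.  Then the
evaluation map `k⟨y_j : j ∈ E⟩ → T` sending `y_j ↦ [x_{a_j}, x_{b_j}]` is
injective, i.e. it is an isomorphism onto the subalgebra `B` of `T` generated
by the graded commutators `[x_{a_j}, x_{b_j}]`. -/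
theorem stmt_12 (k : Type*) [Field k] (hchar : ringChar k ≠ 2) {n : ℕ}
    (p : Fin n → ℕ) (hp : ∀ i, 0 < p i) {E : Type*} (a b : E → Fin n)
    (hab : ∀ j, a j ≠ b j)
    (hdist : ∀ i j : E, i ≠ j → s(a i, b i) ≠ s(a j, b j)) :
    Function.Injective
      (FreeAlgebra.lift k (fun j : E => gradedComm k p (a j) (b j))) ∧
    (FreeAlgebra.lift k (fun j : E => gradedComm k p (a j) (b j))).range =
      Algebra.adjoin k (Set.range fun j : E => gradedComm k p (a j) (b j)) :=
  stmt_12_general k p a b hab hdist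
end
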